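/- arXiv:1906.02902 — 2 statements merged into one kernel-verified Lean document; each statement's English description precedes it below -/
import Mathlib

section
/- For every root γ ∈ Δ and every Weyl group element w ∈ W, the Hausdorff distance in the Dynkin diagram between supp γ and supp(wγ) is at most l(w); that is, for every α ∈ supp γ there exists β ∈ supp(wγ) with d(α,β) ≤ l(w), and for every β ∈ supp(wγ) there exists α ∈ supp γ with d(α,β) ≤ l(w). -/
/-!
A (possibly infinite) reduced crystallographic root system with a fixed system of simple
roots.  Since the simple roots `Π` are linearly independent and every root is a linear
combination of them, we may coordinatize: the span of `Π` is identified with the free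
module `ι →₀ ℚ` on the index set `ι` of simple roots, the simple root indexed by `i`
being `Finsupp.single i 1`.  The coefficients `c_α` of an element `γ = ∑_{α ∈ Π} c_α α`
are then just the values `γ i`, and `supp γ` is `γ.support`.
-/

/-- A reduced crystallographic root system (possibly infinite) together with a chosen set
of simple roots, coordinatized in the basis of simple roots.  The field `coroot α` is the
linear functional `⟨·, α∨⟩` (its values are only constrained for `α ∈ Δ`). -/
structure SimpleRootSystem (ι : Type*) where
  /-- The set of roots. -/
  Δ : Set (ι →₀ ℚ)
  /-- The coroot pairing `β ↦ ⟨β, α∨⟩`. -/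
  coroot : (ι →₀ ℚ) → ((ι →₀ ℚ) →ₗ[ℚ] ℚ)
  /-- Roots are nonzero. -/
  zero_not_mem : (0 : ι →₀ ℚ) ∉ Δ
  /-- `⟨α, α∨⟩ = 2`. -/
  pairing_self : ∀ α ∈ Δ, coroot α α = 2
  /-- Crystallographic: `⟨β, α∨⟩ ∈ ℤ`. -/
  pairing_int : ∀ α ∈ Δ, ∀ β ∈ Δ, ∃ n : ℤ, coroot α β = (n : ℚ)
  /-- The reflection `s_α(β) = β - ⟨β, α∨⟩ α` maps roots to roots. -/
  reflect_mem : ∀ α ∈ Δ, ∀ β ∈ Δ, β - coroot α β • α ∈ Δ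
  /-- Reduced: the only multiples of a root `α` that are roots are `±α`. -/
  reduced : ∀ α ∈ Δ, ∀ c : ℚ, c • α ∈ Δ → c = 1 ∨ c = -1
  /-- Every simple root is a root. -/
  simple_mem : ∀ i : ι, (Finsupp.single i 1 : ι →₀ ℚ) ∈ Δ
  /-- Every root is a linear combination of the simple roots whose coefficients are either
  all nonnegative integers or all nonpositive integers. -/
  coeff_sign : ∀ α ∈ Δ, (∀ i, ∃ n : ℕ, α i = (n : ℚ)) ∨ (∀ i, ∃ n : ℕ, α i = -(n : ℚ))

namespace SimpleRootSystem

variable {ι : Type*}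

/-- The simple root indexed by `i`. -/
noncomputable def simple (i : ι) : ι →₀ ℚ := Finsupp.single i 1

variable (R : SimpleRootSystem ι)

/-- The positive roots `Δ⁺`. -/
def posRoots : Set (ι →₀ ℚ) := {α ∈ R.Δ | ∀ i, 0 ≤ α i}

/-- The negative roots `Δ⁻`. -/
def negRoots : Set (ι →₀ ℚ) := {α ∈ R.Δ | ∀ i, α i ≤ 0}

/-- The reflection `s_α : v ↦ v - ⟨v, α∨⟩ α`, as a linear endomorphism. -/
noncomputable def reflection (α : ι →₀ ℚ) : Module.End ℚ (ι →₀ ℚ) :=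
  LinearMap.id - (R.coroot α).smulRight α

/-- The Weyl group `W`, the group generated by the simple reflections, realized as the
closure of the set of simple reflections inside the endomorphism monoid (each simple
reflection is an involution, so this closure is closed under inverses). -/
noncomputable def weylGroup : Submonoid (Module.End ℚ (ι →₀ ℚ)) :=
  Submonoid.closure {g | ∃ i : ι, g = R.reflection (simple i)}

/-- The length `l(w)`: the least `k` such that `w` is a product of `k` simple
reflections. -/
noncomputable def length (w : Module.End ℚ (ι →₀ ℚ)) : ℕ :=
  sInf {k | ∃ f : Fin k → ι,
    w = (List.ofFn fun j => R.reflection (simple (f j))).prod}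

/-- The inversion set `I(w) = Δ⁺ ∩ w(Δ⁻)`. -/
noncomputable def inversions (w : Module.End ℚ (ι →₀ ℚ)) : Set (ι →₀ ℚ) :=
  R.posRoots ∩ (⇑w '' R.negRoots)

/-- The Dynkin diagram: the graph on the (indices of the) simple roots in which two
distinct simple roots `α ≠ β` are adjacent iff `⟨α, β∨⟩ ≠ 0` (equivalently, in a root
system, `⟨β, α∨⟩ ≠ 0`; we state the symmetrized form). -/
noncomputable def dynkin : SimpleGraph ι where
  Adj i j := i ≠ j ∧
    (R.coroot (simple j) (simple i) ≠ 0 ∨ R.coroot (simple i) (simple j) ≠ 0)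
  symm := ⟨fun _ _ h => ⟨h.1.symm, h.2.symm⟩⟩
  loopless := ⟨fun _ h => h.1 rfl⟩

end SimpleRootSystem

/-!
Write `w` as a word of length `l(w)` in the simple reflections. A simple reflection moves the
support of any vector by Hausdorff distance at most one in the Dynkin diagram, and these
distances add up along the word by the triangle inequality.
-/

def SimpleGraph.CoveredWithin {V : Type*} (G : SimpleGraph V) (n : ℕ∞) (s t : Set V) : Prop :=
  ∀ a ∈ s, ∃ b ∈ t, G.edist a b ≤ n

namespace SimpleGraph.CoveredWithin

variable {V : Type*} {G : SimpleGraph V} {m n : ℕ∞} {s t u : Set V}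

lemma refl (G : SimpleGraph V) (s : Set V) : G.CoveredWithin 0 s s :=
  fun a ha => ⟨a, ha, by simp⟩

lemma trans (hst : G.CoveredWithin m s t) (htu : G.CoveredWithin n t u) :
    G.CoveredWithin (m + n) s u := by
  intro a ha
  obtain ⟨b, hb, hab⟩ := hst a ha
  obtain ⟨c, hc, hbc⟩ := htu b hb
  exact ⟨c, hc, G.edist_triangle.trans (add_le_add hab hbc)⟩

end SimpleGraph.CoveredWithin

namespace SimpleRootSystem

variable {ι : Type*} (R : SimpleRootSystem ι)

lemma reflection_apply (α v : ι →₀ ℚ) : R.reflection α v = v - R.coroot α v • α := rfl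

lemma reflection_simple_apply_of_ne {i a : ι} (h : a ≠ i) (v : ι →₀ ℚ) :
    R.reflection (simple i) v a = v a := by
  simp [reflection_apply, simple, h.symm]

lemma reflection_simple_involutive (i : ι) :
    Function.Involutive (R.reflection (simple i)) := by
  intro v
  have h2 : R.coroot (simple i) (simple i) = 2 := R.pairing_self _ (R.simple_mem i)
  simp only [reflection_apply, map_sub, map_smul, h2]
  module

lemma coroot_simple_eq_zero {i : ι} {v : ι →₀ ℚ} (hvi : v i = 0)
    (hadj : ∀ b ∈ v.support, ¬ R.dynkin.Adj i b) : R.coroot (simple i) v = 0 := by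
  rw [← Finsupp.sum_single v, map_finsuppSum]
  refine Finset.sum_eq_zero fun b hb => ?_
  have hbi : i ≠ b := by rintro rfl; exact Finsupp.mem_support_iff.mp hb hvi
  have hzero : R.coroot (simple i) (simple b) = 0 := by
    by_contra hne
    exact hadj b hb ⟨hbi, Or.inr hne⟩
  change R.coroot (simple i) (Finsupp.single b (v b)) = 0
  rw [← mul_one (v b), ← smul_eq_mul, ← Finsupp.smul_single, map_smul, ← simple, hzero,
    smul_zero]

/-- A simple reflection `s_i` changes only the `i`-th coordinate, and it can only kill that
coordinate if some neighbour of `i` survives: otherwise `⟨s_i v, α_i∨⟩ = 0`, so `s_i` fixes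
`s_i v`, i.e. `v = s_i v`. -/
lemma coveredWithin_support_reflection_simple (i : ι) (v : ι →₀ ℚ) :
    R.dynkin.CoveredWithin 1 v.support (R.reflection (simple i) v).support := by
  intro a ha
  set v' := R.reflection (simple i) v
  by_cases ha' : a ∈ v'.support
  · exact ⟨a, ha', by simp⟩
  have hai : a = i := by
    by_contra hne
    rw [Finsupp.mem_support_iff, R.reflection_simple_apply_of_ne hne,
      ← Finsupp.mem_support_iff] at ha'
    exact ha' ha
  subst hai
  by_contra! hfar
  have hadj : ∀ b ∈ v'.support, ¬ R.dynkin.Adj a b := fun b hb hab =>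
    (hfar b hb).not_ge (SimpleGraph.edist_eq_one_iff_adj.mpr hab).le
  have hfix : R.reflection (simple a) v' = v' := by
    rw [reflection_apply, R.coroot_simple_eq_zero (Finsupp.notMem_support_iff.mp ha') hadj,
      zero_smul, sub_zero]
  rw [R.reflection_simple_involutive a v] at hfix
  exact ha' (hfix ▸ ha)

noncomputable def wordProd (L : List ι) : Module.End ℚ (ι →₀ ℚ) :=
  (L.map fun i => R.reflection (simple i)).prod

lemma wordProd_cons_apply (i : ι) (L : List ι) (v : ι →₀ ℚ) :
    R.wordProd (i :: L) v = R.reflection (simple i) (R.wordProd L v) := rfl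

lemma coveredWithin_support_wordProd (L : List ι) (v : ι →₀ ℚ) :
    R.dynkin.CoveredWithin L.length v.support (R.wordProd L v).support ∧
      R.dynkin.CoveredWithin L.length (R.wordProd L v).support v.support := by
  induction L with
  | nil => exact ⟨.refl _ _, .refl _ _⟩
  | cons i L ih =>
    set u := R.wordProd L v
    have hback : R.dynkin.CoveredWithin 1 (R.reflection (simple i) u).support u.support := by
      simpa only [R.reflection_simple_involutive i u] using
        R.coveredWithin_support_reflection_simple i (R.reflection (simple i) u)
    rw [List.length_cons, Nat.cast_succ, wordProd_cons_apply]
    refine ⟨ih.1.trans (R.coveredWithin_support_reflection_simple i u), ?_⟩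
    rw [add_comm]
    exact hback.trans ih.2

lemma exists_word_of_mem_weylGroup {w : Module.End ℚ (ι →₀ ℚ)} (hw : w ∈ R.weylGroup) :
    ∃ L : List ι, w = R.wordProd L := by
  induction hw using Submonoid.closure_induction with
  | mem _ hg => obtain ⟨i, rfl⟩ := hg; exact ⟨[i], by simp [wordProd]⟩
  | one => exact ⟨[], rfl⟩
  | mul _ _ _ _ ih₁ ih₂ =>
    obtain ⟨L₁, rfl⟩ := ih₁
    obtain ⟨L₂, rfl⟩ := ih₂
    exact ⟨L₁ ++ L₂, by simp [wordProd]⟩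

lemma exists_word_length_eq {w : Module.End ℚ (ι →₀ ℚ)} (hw : w ∈ R.weylGroup) :
    ∃ L : List ι, L.length = R.length w ∧ w = R.wordProd L := by
  have hne : {k | ∃ f : Fin k → ι,
      w = (List.ofFn fun j => R.reflection (simple (f j))).prod}.Nonempty := by
    obtain ⟨L, rfl⟩ := R.exists_word_of_mem_weylGroup hw
    exact ⟨L.length, L.get, by (conv_lhs => rw [wordProd, ← List.ofFn_get L, List.map_ofFn]); rfl⟩
  obtain ⟨f, hf⟩ := Nat.sInf_mem hne
  exact ⟨List.ofFn f, List.length_ofFn, by rwa [wordProd, List.map_ofFn]⟩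

end SimpleRootSystem

open SimpleRootSystem in
theorem SimpleRootSystem.dist_supp_supp_le_general {ι : Type*} (R : SimpleRootSystem ι)
    (γ : ι →₀ ℚ)
    (w : Module.End ℚ (ι →₀ ℚ)) (hw : w ∈ R.weylGroup) :
    (∀ i ∈ γ.support, ∃ j ∈ (w γ).support, R.dynkin.edist i j ≤ (R.length w : ℕ∞)) ∧
    (∀ j ∈ (w γ).support, ∃ i ∈ γ.support, R.dynkin.edist i j ≤ (R.length w : ℕ∞)) := by
  obtain ⟨L, hL, rfl⟩ := R.exists_word_length_eq hw
  obtain ⟨hforth, hback⟩ := R.coveredWithin_support_wordProd L γ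
  rw [← hL]
  refine ⟨hforth, fun j hj => ?_⟩
  obtain ⟨i, hi, hij⟩ := hback j hj
  exact ⟨i, hi, by rwa [SimpleGraph.edist_comm]⟩

open SimpleRootSystem in
/-- **Supports move slowly under the Weyl group**: for a root `γ` and a Weyl group element
`w`, the Hausdorff distance in the Dynkin diagram between `supp γ` and `supp (w γ)` is at
most `l(w)`: every vertex of one support is within (extended) graph distance `l(w)` of
some vertex of the other support. -/
theorem SimpleRootSystem.dist_supp_supp_le {ι : Type*} (R : SimpleRootSystem ι)
    (γ : ι →₀ ℚ) (hγ : γ ∈ R.Δ)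
    (w : Module.End ℚ (ι →₀ ℚ)) (hw : w ∈ R.weylGroup) :
    (∀ i ∈ γ.support, ∃ j ∈ (w γ).support, R.dynkin.edist i j ≤ (R.length w : ℕ∞)) ∧
    (∀ j ∈ (w γ).support, ∃ i ∈ γ.support, R.dynkin.edist i j ≤ (R.length w : ℕ∞)) :=
  SimpleRootSystem.dist_supp_supp_le_general R γ w hw
end

section
/- If w ∈ W is X-reduced and l(w) = j, then w lies in the subgroup W(Y^(j)) generated by the simple reflections at simple roots within distance less than j from Y in the Dynkin diagram. Consequently every simple reflection occurring in any reduced expression of w is indexed by a simple root at distance less than j from Y. -/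
namespace SimpleRootSystem

variable {ι : Type*} (R : SimpleRootSystem ι)

/-- For `X ⊆ Π`, the set `Δ(X)` of roots whose support is contained in `X`. -/
def deltaX (X : Set ι) : Set (ι →₀ ℚ) := {γ ∈ R.Δ | ↑γ.support ⊆ X}

/-- `w` is `X`-reduced if its inversion set contains no root supported in `X`. -/
noncomputable def IsXReduced (X : Set ι) (w : Module.End ℚ (ι →₀ ℚ)) : Prop :=
  R.inversions w ∩ R.deltaX X = ∅

/-- `Y^(j)`: the set of simple roots at (extended) graph distance less than `j` from
`Y = Π \ X` in the Dynkin diagram. -/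
noncomputable def yNbhd (X : Set ι) (j : ℕ) : Set ι :=
  {i | ∃ y, y ∉ X ∧ R.dynkin.edist i y < (j : ℕ∞)}

/-- The subgroup (realized as a submonoid of the endomorphism monoid, as in `weylGroup`)
generated by the simple reflections `s_α` for `α` in a set `s` of simple roots. -/
noncomputable def standardParabolic (s : Set ι) : Submonoid (Module.End ℚ (ι →₀ ℚ)) :=
  Submonoid.closure {g | ∃ i ∈ s, g = R.reflection (simple i)}

end SimpleRootSystem

/-!
If `w = s_{i₁} ⋯ s_{i_j}` is a reduced expression, then for every `k` the root
`β_k = s_{i₁} ⋯ s_{i_{k-1}} α_{i_k}` is an inversion of `w`.  This is the usual exchange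
argument; since coroots are only given as data, the conjugation formula `u s_i u⁻¹ = s_{u α_i}`
behind it rests on the uniqueness of a reflection in a simple root preserving `Δ`.  As `w` is
`X`-reduced, `β_k` has some `y ∈ Y` in its support, and each simple reflection enlarges the
support only by neighbours in the Dynkin diagram, so `d(i_k, y) ≤ k - 1 < j`.
-/

namespace SimpleRootSystem

variable {ι : Type*} (R : SimpleRootSystem ι)

lemma coroot_simple_self (i : ι) : R.coroot (simple i) (simple i) = 2 :=
  R.pairing_self _ (R.simple_mem i)

lemma reflection_simple_mem (i : ι) {β : ι →₀ ℚ} (hβ : β ∈ R.Δ) :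
    R.reflection (simple i) β ∈ R.Δ := by
  rw [reflection_apply]
  exact R.reflect_mem _ (R.simple_mem i) _ hβ

lemma reflection_simple_self (i : ι) : R.reflection (simple i) (simple i) = -simple i := by
  rw [reflection_apply, coroot_simple_self]
  module

lemma reflection_simple_mul_self (i : ι) :
    R.reflection (simple i) * R.reflection (simple i) = 1 := by
  refine LinearMap.ext fun v => ?_
  rw [Module.End.mul_apply, reflection_apply, reflection_apply, map_sub, map_smul,
    coroot_simple_self, Module.End.one_apply, smul_eq_mul]
  module

lemma neg_mem {γ : ι →₀ ℚ} (hγ : γ ∈ R.Δ) : -γ ∈ R.Δ := by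
  have h := R.reflect_mem γ hγ γ hγ
  rw [R.pairing_self γ hγ] at h
  convert h using 1
  module

lemma neg_mem_negRoots {γ : ι →₀ ℚ} (hγ : γ ∈ R.posRoots) : -γ ∈ R.negRoots :=
  ⟨R.neg_mem hγ.1, fun m => by simpa using hγ.2 m⟩

lemma mem_posRoots_or_mem_negRoots {γ : ι →₀ ℚ} (hγ : γ ∈ R.Δ) :
    γ ∈ R.posRoots ∨ γ ∈ R.negRoots := by
  rcases R.coeff_sign γ hγ with h | h
  · exact Or.inl ⟨hγ, fun i => by obtain ⟨n, hn⟩ := h i; rw [hn]; positivity⟩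
  · exact Or.inr ⟨hγ, fun i => by obtain ⟨n, hn⟩ := h i; rw [hn]; simp⟩

lemma mem_posRoots_of_pos_apply {γ : ι →₀ ℚ} (hγ : γ ∈ R.Δ) {a : ι} (ha : 0 < γ a) :
    γ ∈ R.posRoots :=
  (R.mem_posRoots_or_mem_negRoots hγ).resolve_right fun hneg => (hneg.2 a).not_gt ha

lemma simple_apply_self (i : ι) : simple i i = 1 := Finsupp.single_eq_same

lemma simple_apply_of_ne {i m : ι} (h : m ≠ i) : simple i m = 0 :=
  Finsupp.single_eq_of_ne h

lemma simple_not_mem_negRoots (i : ι) : simple i ∉ R.negRoots := fun h =>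
  (h.2 i).not_gt (by rw [simple_apply_self]; exact one_pos)

/-- The root `s_φ (s_ψ α_a) = α_a - (φ α_a - ψ α_a) α_i` has coefficient `1` at `a`,
so it is positive, which bounds its coefficient at `i`. -/
lemma apply_simple_le_of_reflections_mem {i a : ι} (hai : a ≠ i)
    {φ ψ : (ι →₀ ℚ) →ₗ[ℚ] ℚ} (hφ2 : φ (simple i) = 2)
    (hφ : ∀ β ∈ R.Δ, β - φ β • simple i ∈ R.Δ)
    (hψ : ∀ β ∈ R.Δ, β - ψ β • simple i ∈ R.Δ) :
    φ (simple a) ≤ ψ (simple a) := by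
  set γ := simple a - (φ (simple a) - ψ (simple a)) • simple i
  have hγ : γ ∈ R.Δ := by
    have h := hφ _ (hψ (simple a) (R.simple_mem a))
    rw [map_sub, map_smul, hφ2, smul_eq_mul] at h
    convert h using 1
    module
  have hpos := R.mem_posRoots_of_pos_apply hγ (a := a) (by
    simp [γ, simple_apply_self, simple_apply_of_ne hai])
  have := hpos.2 i
  simpa [γ, simple_apply_self, simple_apply_of_ne hai.symm] using this

lemma eq_coroot_simple {i : ι} {φ : (ι →₀ ℚ) →ₗ[ℚ] ℚ} (hφ2 : φ (simple i) = 2)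
    (hφ : ∀ β ∈ R.Δ, β - φ β • simple i ∈ R.Δ) : φ = R.coroot (simple i) := by
  have hc : ∀ β ∈ R.Δ, β - R.coroot (simple i) β • simple i ∈ R.Δ :=
    fun β hβ => R.reflect_mem _ (R.simple_mem i) _ hβ
  refine Finsupp.lhom_ext' fun a => LinearMap.ext_ring ?_
  change φ (simple a) = R.coroot (simple i) (simple a)
  obtain rfl | hai := eq_or_ne a i
  · rw [hφ2, coroot_simple_self]
  · exact le_antisymm (R.apply_simple_le_of_reflections_mem hai hφ2 hφ hc)
      (R.apply_simple_le_of_reflections_mem hai (R.coroot_simple_self i) hc hφ)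

lemma eq_simple_of_reflection_mem_negRoots {γ : ι →₀ ℚ} {i : ι} (hγ : γ ∈ R.posRoots)
    (h : R.reflection (simple i) γ ∈ R.negRoots) : γ = simple i := by
  have hoff : ∀ m, m ≠ i → γ m = 0 := fun m hmi => le_antisymm
    (by simpa [reflection_apply, simple_apply_of_ne hmi] using h.2 m) (hγ.2 m)
  have hγi : γ = γ i • simple i := by
    ext m
    obtain rfl | hmi := eq_or_ne m i
    · simp [simple_apply_self]
    · simp [simple_apply_of_ne hmi, hoff m hmi]
  rcases R.reduced (simple i) (R.simple_mem i) (γ i) (hγi ▸ hγ.1) with h1 | h1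
  · rw [hγi, h1, one_smul]
  · linarith [hγ.2 i]

/-- If `u` preserves `Δ` with a left inverse `v` preserving `Δ`, then `v s_p u` is a reflection
in `α_i` preserving `Δ`, so by uniqueness it is `s_i`. -/
lemma mul_reflection_simple_eq {u v : Module.End ℚ (ι →₀ ℚ)} (hvu : v * u = 1)
    (hu : Set.MapsTo u R.Δ R.Δ) (hv : Set.MapsTo v R.Δ R.Δ) {i p : ι}
    (h : u (simple i) = simple p) :
    u * R.reflection (simple i) = R.reflection (simple p) * u := by
  have hvp : v (simple p) = simple i := by
    rw [← h, ← Module.End.mul_apply, hvu, Module.End.one_apply]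
  have hφ : (R.coroot (simple p)).comp u = R.coroot (simple i) := by
    refine R.eq_coroot_simple (by rw [LinearMap.comp_apply, h, coroot_simple_self])
      fun β hβ => ?_
    have hmem := hv (R.reflection_simple_mem p (hu hβ))
    rwa [reflection_apply, map_sub, map_smul, hvp, ← Module.End.mul_apply, hvu,
      Module.End.one_apply] at hmem
  refine LinearMap.ext fun x => ?_
  rw [Module.End.mul_apply, Module.End.mul_apply, reflection_apply, reflection_apply, map_sub,
    map_smul, h, ← hφ, LinearMap.comp_apply]

@[simp]
lemma wordProd_nil : R.wordProd [] = 1 := rfl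

@[simp]
lemma wordProd_cons (a : ι) (L : List ι) :
    R.wordProd (a :: L) = R.reflection (simple a) * R.wordProd L := by
  simp [wordProd]

@[simp]
lemma wordProd_append (L M : List ι) : R.wordProd (L ++ M) = R.wordProd L * R.wordProd M := by
  simp [wordProd]

lemma wordProd_ofFn {n : ℕ} (f : Fin n → ι) :
    (List.ofFn fun k => R.reflection (simple (f k))).prod = R.wordProd (List.ofFn f) := by
  rw [wordProd, List.map_ofFn]
  rfl

lemma mapsTo_wordProd (L : List ι) : Set.MapsTo (R.wordProd L) R.Δ R.Δ := by
  induction L with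
  | nil => exact Set.mapsTo_id _
  | cons a L ih => exact fun β hβ => R.reflection_simple_mem a (ih hβ)

lemma wordProd_reverse_mul (L : List ι) : R.wordProd L.reverse * R.wordProd L = 1 := by
  induction L with
  | nil => rfl
  | cons a L ih =>
    rw [List.reverse_cons, wordProd_append, wordProd_cons, wordProd_cons, wordProd_nil, mul_one,
      mul_assoc, ← mul_assoc (R.reflection _), reflection_simple_mul_self, one_mul, ih]

lemma wordProd_mul_reverse (L : List ι) : R.wordProd L * R.wordProd L.reverse = 1 := by
  simpa using R.wordProd_reverse_mul L.reverse

lemma wordProd_mul_reflection_of_apply_simple {L : List ι} {i p : ι}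
    (h : R.wordProd L (simple i) = simple p) :
    R.wordProd L * R.reflection (simple i) = R.reflection (simple p) * R.wordProd L :=
  R.mul_reflection_simple_eq (R.wordProd_reverse_mul L) (R.mapsTo_wordProd L)
    (R.mapsTo_wordProd L.reverse) h

lemma exists_wordProd_mul_reflection_eq {L : List ι} {i : ι}
    (h : R.wordProd L (simple i) ∈ R.negRoots) :
    ∃ L' : List ι, L'.length + 1 = L.length ∧
      R.wordProd L * R.reflection (simple i) = R.wordProd L' := by
  induction L with
  | nil => exact absurd h (R.simple_not_mem_negRoots i)
  | cons a L ih =>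
    rw [wordProd_cons, Module.End.mul_apply] at h
    rcases R.mem_posRoots_or_mem_negRoots (R.mapsTo_wordProd L (R.simple_mem i)) with hpos | hneg
    · refine ⟨L, rfl, ?_⟩
      rw [wordProd_cons, mul_assoc, R.wordProd_mul_reflection_of_apply_simple
        (R.eq_simple_of_reflection_mem_negRoots hpos h), ← mul_assoc,
        reflection_simple_mul_self, one_mul]
    · obtain ⟨L', hlen, hL'⟩ := ih hneg
      exact ⟨a :: L', by simp [hlen], by rw [wordProd_cons, mul_assoc, hL', wordProd_cons]⟩

def IsReducedWord (L : List ι) : Prop := R.length (R.wordProd L) = L.length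

lemma length_wordProd_le (L : List ι) : R.length (R.wordProd L) ≤ L.length :=
  Nat.sInf_le ⟨L.get, by rw [wordProd_ofFn, List.ofFn_get]⟩

lemma exists_isReducedWord_wordProd_eq (L : List ι) :
    ∃ M : List ι, R.IsReducedWord M ∧ R.wordProd M = R.wordProd L := by
  obtain ⟨f, hf⟩ := Nat.sInf_mem (s := {k | ∃ f : Fin k → ι,
    R.wordProd L = (List.ofFn fun j => R.reflection (simple (f j))).prod})
    ⟨L.length, L.get, by rw [wordProd_ofFn, List.ofFn_get]⟩
  rw [wordProd_ofFn] at hf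
  exact ⟨List.ofFn f, by rw [IsReducedWord, ← hf, List.length_ofFn]; rfl, hf.symm⟩

lemma exists_isReducedWord_of_mem_weylGroup {w : Module.End ℚ (ι →₀ ℚ)}
    (hw : w ∈ R.weylGroup) :
    ∃ L : List ι, R.IsReducedWord L ∧ R.wordProd L = w := by
  suffices ∃ L : List ι, R.wordProd L = w by
    obtain ⟨L, rfl⟩ := this
    exact R.exists_isReducedWord_wordProd_eq L
  induction hw using Submonoid.closure_induction with
  | mem x hx => obtain ⟨i, rfl⟩ := hx; exact ⟨[i], by simp⟩
  | one => exact ⟨[], rfl⟩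
  | mul x y _ _ hx hy =>
    obtain ⟨L, rfl⟩ := hx
    obtain ⟨M, rfl⟩ := hy
    exact ⟨L ++ M, R.wordProd_append L M⟩

lemma length_wordProd_reverse_le (L : List ι) :
    R.length (R.wordProd L.reverse) ≤ R.length (R.wordProd L) := by
  obtain ⟨M, hM, hML⟩ := R.exists_isReducedWord_wordProd_eq L
  have hinv : R.wordProd L.reverse = R.wordProd M.reverse :=
    left_inv_eq_right_inv (R.wordProd_reverse_mul L) (hML ▸ R.wordProd_mul_reverse M)
  rw [hinv, ← hML, hM, ← List.length_reverse]
  exact R.length_wordProd_le M.reverse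

lemma length_wordProd_reverse (L : List ι) :
    R.length (R.wordProd L.reverse) = R.length (R.wordProd L) :=
  le_antisymm (R.length_wordProd_reverse_le L)
    (by simpa using R.length_wordProd_reverse_le L.reverse)

section IsReducedWord

variable {R}

lemma IsReducedWord.reverse {L : List ι} (h : R.IsReducedWord L) : R.IsReducedWord L.reverse := by
  rw [IsReducedWord, length_wordProd_reverse, h, List.length_reverse]

lemma IsReducedWord.wordProd_apply_simple_mem_posRoots {A B : List ι} {i : ι}
    (h : R.IsReducedWord (A ++ i :: B)) : R.wordProd A (simple i) ∈ R.posRoots := by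
  refine (R.mem_posRoots_or_mem_negRoots (R.mapsTo_wordProd A (R.simple_mem i))).resolve_right
    fun hneg => ?_
  obtain ⟨A', hlen, hA'⟩ := R.exists_wordProd_mul_reflection_eq hneg
  have hdel : R.wordProd (A ++ i :: B) = R.wordProd (A' ++ B) := by
    rw [wordProd_append, wordProd_cons, ← mul_assoc, hA', wordProd_append]
  have := R.length_wordProd_le (A' ++ B)
  rw [← hdel, h] at this
  simp only [List.length_append, List.length_cons] at this
  omega

lemma IsReducedWord.wordProd_apply_simple_mem_inversions {A B : List ι} {i : ι}
    (h : R.IsReducedWord (A ++ i :: B)) :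
    R.wordProd A (simple i) ∈ R.inversions (R.wordProd (A ++ i :: B)) := by
  have hrev : R.IsReducedWord (B.reverse ++ i :: A.reverse) := by simpa using h.reverse
  refine ⟨h.wordProd_apply_simple_mem_posRoots, -R.wordProd B.reverse (simple i),
    R.neg_mem_negRoots hrev.wordProd_apply_simple_mem_posRoots, ?_⟩
  rw [wordProd_append, wordProd_cons, Module.End.mul_apply, Module.End.mul_apply, map_neg,
    ← Module.End.mul_apply (R.wordProd B), wordProd_mul_reverse, Module.End.one_apply, map_neg,
    reflection_simple_self, neg_neg]

end IsReducedWord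

lemma exists_adj_of_coroot_ne_zero {a : ι} {x : ι →₀ ℚ} (ha : a ∉ x.support)
    (h : R.coroot (simple a) x ≠ 0) : ∃ m ∈ x.support, R.dynkin.Adj a m := by
  have hsum :
      R.coroot (simple a) x = ∑ m ∈ x.support, x m * R.coroot (simple a) (simple m) := by
    conv_lhs => rw [← Finsupp.sum_single x]
    rw [map_finsuppSum, Finsupp.sum]
    refine Finset.sum_congr rfl fun m _ => ?_
    rw [← Finsupp.smul_single_one, map_smul, smul_eq_mul]
    rfl
  obtain ⟨m, hm, hne⟩ := Finset.exists_ne_zero_of_sum_ne_zero (hsum ▸ h)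
  exact ⟨m, hm, fun ham => ha (ham ▸ hm), Or.inr (right_ne_zero_of_mul hne)⟩

/-- `s_a` changes only the coefficient at `a`, and makes it nonzero only if `a` is adjacent to
the support. -/
lemma edist_le_of_mem_support_reflection {i a : ι} {n : ℕ∞} {x : ι →₀ ℚ}
    (hx : ∀ m ∈ x.support, R.dynkin.edist m i ≤ n) :
    ∀ m ∈ (R.reflection (simple a) x).support, R.dynkin.edist m i ≤ n + 1 := by
  intro m hm
  by_cases hmx : m ∈ x.support
  · exact (hx m hmx).trans le_self_add
  have hxm : x m = 0 := Finsupp.notMem_support_iff.mp hmx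
  rw [Finsupp.mem_support_iff, reflection_apply] at hm
  obtain rfl : m = a := by
    by_contra hma
    simp [simple_apply_of_ne hma, hxm] at hm
  obtain ⟨m', hm', hadj⟩ :=
    R.exists_adj_of_coroot_ne_zero hmx fun h0 => hm (by simp [h0, hxm])
  calc R.dynkin.edist m i ≤ R.dynkin.edist m m' + R.dynkin.edist m' i :=
        SimpleGraph.edist_triangle
    _ ≤ 1 + n := add_le_add (SimpleGraph.edist_eq_one_iff_adj.mpr hadj).le (hx m' hm')
    _ = n + 1 := add_comm _ _

lemma edist_le_of_mem_support_wordProd (L : List ι) (i : ι) :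
    ∀ m ∈ (R.wordProd L (simple i)).support, R.dynkin.edist m i ≤ L.length := by
  induction L with
  | nil =>
    intro m hm
    rw [wordProd_nil, Module.End.one_apply, simple, Finsupp.support_single i one_ne_zero,
      Finset.mem_singleton] at hm
    simp [hm]
  | cons a L ih =>
    rw [wordProd_cons, Module.End.mul_apply, List.length_cons, Nat.cast_succ]
    exact R.edist_le_of_mem_support_reflection ih

lemma mem_yNbhd_of_mem_isReducedWord {X : Set ι} {L : List ι}
    (hred : R.IsXReduced X (R.wordProd L)) (hL : R.IsReducedWord L) {i : ι} (hi : i ∈ L) :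
    i ∈ R.yNbhd X L.length := by
  obtain ⟨A, B, rfl⟩ := List.append_of_mem hi
  have hinv := hL.wordProd_apply_simple_mem_inversions
  obtain ⟨y, hy, hyX⟩ : ∃ y ∈ (R.wordProd A (simple i)).support, y ∉ X := by
    by_contra! hX
    exact Set.eq_empty_iff_forall_notMem.mp hred _
      ⟨hinv, R.mapsTo_wordProd A (R.simple_mem i), hX⟩
  refine ⟨y, hyX, ?_⟩
  rw [SimpleGraph.edist_comm]
  refine (R.edist_le_of_mem_support_wordProd A i y hy).trans_lt ?_
  exact_mod_cast (by simp : A.length < (A ++ i :: B).length)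

lemma wordProd_mem_standardParabolic {s : Set ι} {L : List ι} (hL : ∀ i ∈ L, i ∈ s) :
    R.wordProd L ∈ R.standardParabolic s :=
  Submonoid.list_prod_mem _ fun g hg => by
    obtain ⟨i, hi, rfl⟩ := List.mem_map.mp hg
    exact Submonoid.subset_closure ⟨i, hL i hi, rfl⟩

end SimpleRootSystem

open SimpleRootSystem in
/-- **`X`-reduced elements are supported near `Y`**: if `w ∈ W` is `X`-reduced of length
`j`, then `w` lies in the subgroup `W(Y^(j))` generated by the simple reflections at
simple roots within distance less than `j` from `Y = Π \ X`; consequently every simple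
reflection occurring in any reduced expression of `w` is indexed by a simple root at
distance less than `j` from `Y`. -/
theorem SimpleRootSystem.xReduced_mem_parabolic {ι : Type*} (R : SimpleRootSystem ι)
    (X : Set ι) (w : Module.End ℚ (ι →₀ ℚ)) (hw : w ∈ R.weylGroup)
    (hred : R.IsXReduced X w) (j : ℕ) (hlen : R.length w = j) :
    w ∈ R.standardParabolic (R.yNbhd X j) ∧
      ∀ f : Fin j → ι,
        w = (List.ofFn fun k => R.reflection (simple (f k))).prod →
          ∀ k : Fin j, f k ∈ R.yNbhd X j := by
  refine ⟨?_, fun f hf k => ?_⟩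
  · obtain ⟨L, hL, rfl⟩ := R.exists_isReducedWord_of_mem_weylGroup hw
    rw [← hlen, hL]
    exact R.wordProd_mem_standardParabolic fun i hi => R.mem_yNbhd_of_mem_isReducedWord hred hL hi
  · rw [wordProd_ofFn] at hf
    subst hf
    have hL : R.IsReducedWord (List.ofFn f) := by rw [IsReducedWord, hlen, List.length_ofFn]
    simpa using R.mem_yNbhd_of_mem_isReducedWord hred hL (List.mem_ofFn.mpr ⟨k, rfl⟩)
end
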